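/- arXiv:1301.3007 — 2 statements merged into one kernel-verified Lean document; each statement's English description precedes it below -/
import Mathlib

section
/- Superposition: if ρ(P) < 1, ∑_n |G_n| < ∞ with S = ∑_n G_n, and I is a fair sequence, then the D-iteration with added fluids converges and H(P, B, I, G) = H(P, B+S, I) = (I−P)^{−1}(B+S). -/
/-!
Gelfand's formula turns `ρ(P) < 1` into `Pᵏ → 0`. Hence `1 - P` is invertible and, `P` being
nonnegative, some weight `w ≥ 0` satisfies `wᵀ P + 1 ≤ wᵀ`. The weighted `ℓ¹` norm
`∑ⱼ wⱼ |Fⱼ|` is then a Lyapunov function: a diffusion step at node `i` lowers it by at least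
the diffused amount `|Fᵢ + Gᵢ|`, and the added fluids raise it by a summable amount, so the
diffused amounts are summable. The increments of `F` are `G` plus `P - 1` applied to the
diffused fluid, so `F` converges; fairness makes the limit vanish, because right after a
diffusion at `j` the coordinate `j` only holds the fluid that `P` sends back to it. The
conservation law `(1 - P) Hₙ = B + ∑_{k<n} Gₖ - Fₙ` then gives the limit of `H`.
-/

open Matrix Filter Topology Finset

theorem tendsto_pow_nhds_zero_of_spectralRadius_lt_one {A : Type*} [NormedRing A]
    [NormedAlgebra ℂ A] [CompleteSpace A] {a : A} (ha : spectralRadius ℂ a < 1) :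
    Tendsto (a ^ ·) atTop (𝓝 0) := by
  obtain ⟨r, hρr, hr1⟩ := ENNReal.lt_iff_exists_nnreal_btwn.1 ha
  have hroot : ∀ᶠ k : ℕ in atTop, ‖a ^ k‖ ^ (1 / k : ℝ) < r :=
    ((spectrum.pow_norm_pow_one_div_tendsto_nhds_spectralRadius a).eventually_lt_const
      hρr).mono fun k hk => (ENNReal.ofReal_lt_coe_iff (by positivity)).1 hk
  have hbound : ∀ᶠ k : ℕ in atTop, ‖a ^ k‖ ≤ (r : ℝ) ^ k := by
    filter_upwards [hroot, eventually_gt_atTop 0] with k hk hk0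
    rw [one_div] at hk
    have := (Real.rpow_inv_lt_iff_of_pos (norm_nonneg _) r.2 (Nat.cast_pos.2 hk0)).1 hk
    exact_mod_cast this.le
  exact squeeze_zero_norm' hbound
    (tendsto_pow_atTop_nhds_zero_of_lt_one r.2 (by exact_mod_cast hr1))

theorem Matrix.exists_norm_mulVec_le {l m : Type*} [Fintype l] [Fintype m]
    (A : Matrix l m ℝ) : ∃ C, ∀ x, ‖A *ᵥ x‖ ≤ C * ‖x‖ :=
  let := Matrix.linftyOpSeminormedAddCommGroup (m := l) (n := m) (α := ℝ)
  ⟨‖A‖, linfty_opNorm_mulVec A⟩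

theorem summable_of_succ_add_le {a c g : ℕ → ℝ} (ha : ∀ k, 0 ≤ a k) (hc : ∀ k, 0 ≤ c k)
    (hg : Summable g) (hg0 : ∀ k, 0 ≤ g k) (h : ∀ k, a (k + 1) + c k ≤ a k + g k) :
    Summable c := by
  have hpartial : ∀ m, ∑ k ∈ range m, c k + a m ≤ a 0 + ∑ k ∈ range m, g k := by
    intro m
    induction m with
    | zero => simp
    | succ m ih =>
      rw [sum_range_succ, sum_range_succ]
      linarith [h m]
  refine summable_of_sum_range_le (c := a 0 + ∑' k, g k) hc fun m => ?_
  linarith [hpartial m, ha m, hg.sum_le_tsum (range m) (fun k _ => hg0 k)]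

theorem pi_norm_le_sum_abs {n : Type*} [Fintype n] (x : n → ℝ) : ‖x‖ ≤ ∑ i, |x i| :=
  (pi_norm_le_iff_of_nonneg (sum_nonneg fun _ _ => abs_nonneg _)).2 fun i =>
    single_le_sum (f := fun i => |x i|) (fun _ _ => abs_nonneg _) (mem_univ i)

variable {n : Type*} [Fintype n] [DecidableEq n]

namespace Matrix

theorem tendsto_pow_nhds_zero_of_norm_spectrum_map_lt_one {P : Matrix n n ℝ}
    (hρ : ∀ μ ∈ spectrum ℂ (P.map (algebraMap ℝ ℂ)), ‖μ‖ < 1) :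
    Tendsto (P ^ ·) atTop (𝓝 0) := by
  cases isEmpty_or_nonempty n
  · exact tendsto_const_nhds.congr fun k => Subsingleton.elim _ _
  let := Matrix.linftyOpNormedRing (n := n) (α := ℂ)
  let := Matrix.linftyOpNormedAlgebra (n := n) (R := ℂ) (α := ℂ)
  set Q := P.map (algebraMap ℝ ℂ)
  have hQ : spectralRadius ℂ Q < 1 := by
    simpa using spectrum.spectralRadius_lt_of_forall_lt Q (r := 1) fun z hz => mod_cast hρ z hz
  have hre : ∀ k, P ^ k = (Q ^ k).map Complex.re := by
    intro k
    rw [← Matrix.map_pow]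
    ext
    simp
  simpa [hre, Function.comp_def] using
    ((continuous_id.matrix_map Complex.continuous_re).tendsto 0).comp
      (tendsto_pow_nhds_zero_of_spectralRadius_lt_one hQ)

theorem isUnit_one_sub_of_tendsto_pow {K : Type*} [Field K] [TopologicalSpace K]
    [IsTopologicalRing K] [T2Space K] {P : Matrix n n K}
    (hP : Tendsto (P ^ ·) atTop (𝓝 0)) : IsUnit (1 - P) := by
  refine mulVec_injective_iff_isUnit.1 fun x y hxy => ?_
  have hfix : P *ᵥ (x - y) = x - y := by
    rw [sub_mulVec, sub_mulVec, one_mulVec, one_mulVec] at hxy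
    rw [mulVec_sub]
    linear_combination (norm := module) -hxy
  have hpow : ∀ k, P ^ k *ᵥ (x - y) = x - y := by
    intro k
    induction k with
    | zero => exact one_mulVec _
    | succ k ih => rw [pow_succ, ← mulVec_mulVec, hfix, ih]
  have hlim := ((continuous_id.matrix_mulVec (continuous_const (y := x - y))).tendsto 0).comp hP
  simp only [Function.comp_def, id, hpow, zero_mulVec] at hlim
  exact sub_eq_zero.1 (tendsto_nhds_unique tendsto_const_nhds hlim)

theorem exists_vecMul_add_one_le {P : Matrix n n ℝ} (hP : ∀ i j, 0 ≤ P i j)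
    (hPk : Tendsto (P ^ ·) atTop (𝓝 0)) : ∃ w : n → ℝ, 0 ≤ w ∧ ∀ i, (w ᵥ* P) i + 1 ≤ w i := by
  set u : ℕ → n → ℝ := fun k => 1 ᵥ* P ^ k
  have hu : Tendsto u atTop (𝓝 0) := by
    simpa [u, Function.comp_def] using
      ((continuous_const.matrix_vecMul continuous_id).tendsto 0).comp hPk
  obtain ⟨K, hK⟩ : ∃ K, ∀ i, u K i < 1 / 2 :=
    (eventually_all.2 fun i =>
      (tendsto_pi_nhds.1 hu i).eventually_lt_const (by norm_num)).exists
  have hu_nonneg : ∀ k, 0 ≤ u k := fun k i =>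
    sum_nonneg fun j _ => mul_nonneg zero_le_one (pow_apply_nonneg hP k j i)
  have htel : (∑ k ∈ range K, u k) ᵥ* P + u 0 = ∑ k ∈ range K, u k + u K := by
    have hsucc : ∀ k, u k ᵥ* P = u (k + 1) := fun k => by
      simp only [u, vecMul_vecMul, pow_succ]
    rw [sum_vecMul, Finset.sum_congr rfl fun k _ => hsucc k, ← sum_range_succ',
      sum_range_succ]
  refine ⟨(2 : ℝ) • ∑ k ∈ range K, u k, fun i => ?_, fun i => ?_⟩
  · simpa using mul_nonneg zero_le_two (Finset.sum_nonneg fun k _ => hu_nonneg k i)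
  · have hi := congrFun htel i
    simp only [u, pow_zero, vecMul_one, Pi.add_apply, Pi.one_apply] at hi
    simp only [smul_vecMul, Pi.smul_apply, smul_eq_mul]
    linarith [hK i]

/-- The paper's `P_i x = x - J_i x + P J_i x`, with `J_i x = Pi.single i (x i)`. -/
def diffuseAt (P : Matrix n n ℝ) (i : n) (x : n → ℝ) : n → ℝ :=
  x - Pi.single i (x i) + P *ᵥ Pi.single i (x i)

section Diffusion

variable (P : Matrix n n ℝ) (i : n) (x : n → ℝ)

theorem single_one_mulVec : single i i (1 : ℝ) *ᵥ x = Pi.single i (x i) := by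
  rw [single_mulVec, one_mul, Pi.single]

theorem one_sub_single_add_mul_single_mulVec :
    (1 - single i i 1 + P * single i i 1) *ᵥ x = P.diffuseAt i x := by
  rw [add_mulVec, sub_mulVec, one_mulVec, ← mulVec_mulVec, single_one_mulVec, diffuseAt]

theorem diffuseAt_apply (j : n) :
    P.diffuseAt i x j = x j - (Pi.single i (x i) : n → ℝ) j + P j i * x i := by
  simp [diffuseAt, mulVec_single, mul_comm]

theorem diffuseAt_sub_self : P.diffuseAt i x - x = (P - 1) *ᵥ Pi.single i (x i) := by
  rw [diffuseAt, sub_mulVec, one_mulVec]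
  abel

end Diffusion

theorem sum_mul_abs_diffuseAt_add_le {P : Matrix n n ℝ} {i : n} {w : n → ℝ} (hw : 0 ≤ w)
    (hP : ∀ j, 0 ≤ P j i) (hwP : (w ᵥ* P) i + 1 ≤ w i) (x : n → ℝ) :
    ∑ j, w j * |P.diffuseAt i x j| + |x i| ≤ ∑ j, w j * |x j| := by
  have hterm : ∀ j, w j * |P.diffuseAt i x j| ≤
      w j * |x j| - (Pi.single i (w i * |x i|) : n → ℝ) j + w j * P j i * |x i| := by
    intro j
    rw [diffuseAt_apply]
    rcases eq_or_ne j i with rfl | hj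
    · simp [abs_mul, abs_of_nonneg (hP j), mul_assoc]
    · simp only [Pi.single_apply, hj, if_false, sub_zero]
      calc w j * |x j + P j i * x i| ≤ w j * (|x j| + P j i * |x i|) := by
            gcongr
            · exact hw j
            · exact (abs_add_le _ _).trans_eq (by rw [abs_mul, abs_of_nonneg (hP j)])
        _ = _ := by ring
  have hsum := sum_le_sum fun j (_ : j ∈ univ) => hterm j
  rw [sum_add_distrib, sum_sub_distrib, sum_pi_single', if_pos (mem_univ _),
    ← sum_mul] at hsum
  have hcol : (∑ j, w j * P j i) * |x i| ≤ (w i - 1) * |x i| :=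
    mul_le_mul_of_nonneg_right (by simp only [vecMul, dotProduct] at hwP; linarith) (abs_nonneg _)
  linarith

end Matrix

namespace DIteration

variable {P : Matrix n n ℝ} {ι : ℕ → n} {F G : ℕ → n → ℝ}

theorem summable_abs_diffused (hP : ∀ i j, 0 ≤ P i j) (hPk : Tendsto (P ^ ·) atTop (𝓝 0))
    (hG : Summable fun k => ‖G k‖) (hF : ∀ k, F (k + 1) = P.diffuseAt (ι k) (F k + G k)) :
    Summable fun k => |(F k + G k) (ι k)| := by
  obtain ⟨w, hw, hwP⟩ := exists_vecMul_add_one_le hP hPk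
  have hGw : Summable fun k => ∑ j, w j * |G k j| :=
    summable_sum fun j _ => (hG.of_nonneg_of_le (fun k => abs_nonneg _)
      fun k => norm_le_pi_norm (G k) j).mul_left (w j)
  refine summable_of_succ_add_le (a := fun k => ∑ j, w j * |F k j|)
    (fun k => sum_nonneg fun j _ => mul_nonneg (hw j) (abs_nonneg _))
    (fun k => abs_nonneg _) hGw (fun k => sum_nonneg fun j _ => mul_nonneg (hw j) (abs_nonneg _))
    fun k => ?_
  have hstep := sum_mul_abs_diffuseAt_add_le hw (fun j => hP j (ι k)) (hwP (ι k)) (F k + G k)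
  have htri : ∑ j, w j * |(F k + G k) j| ≤ ∑ j, w j * |F k j| + ∑ j, w j * |G k j| := by
    rw [← sum_add_distrib]
    gcongr with j
    rw [← mul_add]
    exact mul_le_mul_of_nonneg_left (abs_add_le _ _) (hw j)
  rw [hF k]
  linarith

theorem tendsto_fluid_nhds_zero (hfair : ∀ j, ∃ᶠ k in atTop, ι k = j)
    (hG : Summable fun k => ‖G k‖) (hr : Summable fun k => |(F k + G k) (ι k)|)
    (hF : ∀ k, F (k + 1) = P.diffuseAt (ι k) (F k + G k)) : Tendsto F atTop (𝓝 0) := by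
  set r : ℕ → n → ℝ := fun k => Pi.single (ι k) ((F k + G k) (ι k))
  have hr' : Summable fun k => ‖r k‖ := by simpa [r, Pi.norm_single] using hr
  obtain ⟨C, hC⟩ := (P - 1).exists_norm_mulVec_le
  obtain ⟨C', hC'⟩ := P.exists_norm_mulVec_le
  have hinc : ∀ k, F (k + 1) - F k = G k + (P - 1) *ᵥ r k := fun k => by
    rw [← diffuseAt_sub_self, hF k]
    abel
  have hcauchy : CauchySeq F := by
    refine cauchySeq_of_summable_dist (hG.add (hr'.mul_left C) |>.of_nonneg_of_le
      (fun k => dist_nonneg) fun k => ?_)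
    rw [dist_comm, dist_eq_norm, hinc]
    exact (norm_add_le _ _).trans (add_le_add le_rfl (hC _))
  obtain ⟨L, hL⟩ := cauchySeq_tendsto_of_complete hcauchy
  suffices L = 0 from this ▸ hL
  funext j
  have hPr : Tendsto (fun k => (P *ᵥ r k) j) atTop (𝓝 0) := by
    refine squeeze_zero_norm (fun k => (norm_le_pi_norm _ j).trans (hC' (r k))) ?_
    simpa using hr'.tendsto_atTop_zero.const_mul C'
  refine tendsto_nhds_unique_of_frequently_eq
    ((continuous_apply j).tendsto L |>.comp ((tendsto_add_atTop_iff_nat 1).2 hL)) hPr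
    ((hfair j).mono fun k hk => ?_)
  subst hk
  simp only [Function.comp_apply, hF k, diffuseAt, r, Pi.add_apply, Pi.sub_apply,
    Pi.single_eq_same, sub_self, zero_add]

theorem history_add_fluid_eq {H : ℕ → n → ℝ} (hH0 : H 0 = 0)
    (hF : ∀ k, F (k + 1) = P.diffuseAt (ι k) (F k + G k))
    (hH : ∀ k, H (k + 1) = H k + Pi.single (ι k) ((F k + G k) (ι k))) (m : ℕ) :
    H m + F m = P *ᵥ H m + F 0 + ∑ k ∈ range m, G k := by
  induction m with
  | zero => simp [hH0]
  | succ m ih =>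
    rw [hH m, hF m, sum_range_succ, mulVec_add, diffuseAt]
    linear_combination (norm := module) ih

end DIteration

/-- superposition: if `ρ(P) < 1`, the added fluids are absolutely summable
with sum `S`, and the sequence is fair, then the D-iteration with added fluids converges
to `H(P, B+S, I) = (I-P)⁻¹ (B+S)`. -/
theorem diteration_superposition {N : ℕ} (P : Matrix (Fin N) (Fin N) ℝ)
    (B : Fin N → ℝ) (G : ℕ → Fin N → ℝ)
    (hPpos : ∀ i j, 0 ≤ P i j)
    (hρ : ∀ μ ∈ spectrum ℂ (P.map (algebraMap ℝ ℂ)), ‖μ‖ < 1)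
    (hG : Summable fun n => ∑ i, |G n i|)
    (ι : ℕ → Fin N) (hfair : ∀ i : Fin N, ∀ m : ℕ, ∃ n ≥ m, ι n = i)
    (F H : ℕ → Fin N → ℝ) (hF0 : F 0 = B) (hH0 : H 0 = 0)
    (hF : ∀ n, F (n + 1) =
      (1 - Matrix.single (ι n) (ι n) 1 + P * Matrix.single (ι n) (ι n) 1) *ᵥ (F n + G n))
    (hH : ∀ n, H (n + 1) = H n + Matrix.single (ι n) (ι n) 1 *ᵥ (F n + G n)) :
    Tendsto H atTop (𝓝 ((1 - P)⁻¹ *ᵥ (B + ∑' n, G n))) := by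
  have hPk := tendsto_pow_nhds_zero_of_norm_spectrum_map_lt_one hρ
  have hF' : ∀ k, F (k + 1) = P.diffuseAt (ι k) (F k + G k) := fun k =>
    (hF k).trans (one_sub_single_add_mul_single_mulVec P (ι k) _)
  have hH' : ∀ k, H (k + 1) = H k + Pi.single (ι k) ((F k + G k) (ι k)) := fun k =>
    (hH k).trans (by rw [single_one_mulVec])
  have hGnorm : Summable fun k => ‖G k‖ :=
    hG.of_nonneg_of_le (fun k => norm_nonneg _) fun k => pi_norm_le_sum_abs (G k)
  have hFlim : Tendsto F atTop (𝓝 0) :=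
    DIteration.tendsto_fluid_nhds_zero (fun j => frequently_atTop.2 (hfair j)) hGnorm
      (DIteration.summable_abs_diffused hPpos hPk hGnorm hF') hF'
  have hdet : IsUnit (1 - P).det :=
    (isUnit_iff_isUnit_det _).1 (isUnit_one_sub_of_tendsto_pow hPk)
  have hconserved : ∀ m, (1 - P) *ᵥ H m = B + ∑ k ∈ range m, G k - F m := fun m => by
    rw [sub_mulVec, one_mulVec, ← hF0]
    linear_combination (norm := module) DIteration.history_add_fluid_eq hH0 hF' hH' m
  have hlim : Tendsto (fun m => B + ∑ k ∈ range m, G k - F m) atTop (𝓝 (B + ∑' k, G k)) := by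
    simpa using (tendsto_const_nhds.add (Summable.of_norm hGnorm).hasSum.tendsto_sum_nat).sub hFlim
  refine (((continuous_const (y := (1 - P)⁻¹)).matrix_mulVec continuous_id).tendsto _).comp hlim
    |>.congr fun m => ?_
  rw [Function.comp_apply, id, ← hconserved, mulVec_mulVec, nonsing_inv_mul _ hdet, one_mulVec]
end

section
/- Negative-fluid-only diffusion with ρ(P) < 1: if the D-iteration starts from F_0 = P·e − e (where e = (1/N,…,1/N)^T), only coordinates with negative fluid are ever diffused, the selection is fair among coordinates with negative fluid, and ρ(P) < 1, then H_n converges to −e, i.e., the limit H satisfies H = −e and the residual fluid tends to 0. -/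
open Matrix BigOperators Filter Topology

/-!
Write `G k = x + H k`. The invariant `F k = (P - 1) *ᵥ G k` shows that diffusing coordinate `i`
replaces `G k i` by `(P *ᵥ G k) i ≥ 0`, so `G k` stays nonnegative; since only negative fluid
is diffused it is also antitone, hence converges to some `G ≥ 0`. By fairness every coordinate
keeps being diffused, which forces the limit fluid `(P - 1) *ᵥ G` to be nonnegative. Thus
`G ≤ P *ᵥ G ≤ P ^ k *ᵥ G → 0`, and `G = 0` because `ρ(P) < 1`.
-/

theorem tendsto_pow_atTop_nhds_zero_of_spectralRadius_lt_one {A : Type*} [NormedRing A]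
    [NormedAlgebra ℂ A] [CompleteSpace A] {a : A} (h : spectralRadius ℂ a < 1) :
    Tendsto (a ^ ·) atTop (𝓝 0) := by
  obtain ⟨r, hr, hr1⟩ := ENNReal.lt_iff_exists_nnreal_btwn.mp h
  have hle : ∀ᶠ k : ℕ in atTop, ‖a ^ k‖₊ ≤ r ^ k := by
    have hgelfand := spectrum.pow_nnnorm_pow_one_div_tendsto_nhds_spectralRadius a
    filter_upwards [hgelfand.eventually_lt_const hr, eventually_ne_atTop 0] with k hk hk0
    have := ENNReal.rpow_le_rpow hk.le (Nat.cast_nonneg k : (0 : ℝ) ≤ k)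
    rwa [← ENNReal.rpow_mul, one_div_mul_cancel (by exact_mod_cast hk0), ENNReal.rpow_one,
      ENNReal.rpow_natCast, ← ENNReal.coe_pow, ENNReal.coe_le_coe] at this
  refine squeeze_zero_norm' (hle.mono fun k hk => ?_)
    (tendsto_pow_atTop_nhds_zero_of_lt_one r.coe_nonneg (by exact_mod_cast hr1))
  exact_mod_cast hk

namespace Matrix

variable {n : Type*} [Fintype n]

theorem mulVec_mono_of_nonneg {P : Matrix n n ℝ} (hP : ∀ i j, 0 ≤ P i j) {v w : n → ℝ}
    (h : v ≤ w) : P *ᵥ v ≤ P *ᵥ w :=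
  fun i => dotProduct_le_dotProduct_of_nonneg_left h (hP i)

variable [DecidableEq n]

theorem tendsto_pow_atTop_nhds_zero_of_norm_spectrum_lt_one {Q : Matrix n n ℂ}
    (hQ : ∀ μ ∈ spectrum ℂ Q, ‖μ‖ < 1) : Tendsto (Q ^ ·) atTop (𝓝 0) := by
  cases isEmpty_or_nonempty n
  · exact tendsto_const_nhds.congr fun k => Subsingleton.elim _ _
  let := Matrix.linftyOpNormedRing (n := n) (α := ℂ)
  let := Matrix.linftyOpNormedAlgebra (R := ℂ) (n := n) (α := ℂ)
  have : CompleteSpace (Matrix n n ℂ) := FiniteDimensional.complete ℂ _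
  refine tendsto_pow_atTop_nhds_zero_of_spectralRadius_lt_one ?_
  simpa using spectrum.spectralRadius_lt_of_forall_lt Q (r := 1)
    fun z hz => by simpa [← NNReal.coe_lt_coe] using hQ z hz

theorem tendsto_pow_atTop_nhds_zero_of_norm_spectrum_map_lt_one {P : Matrix n n ℝ}
    (hP : ∀ μ ∈ spectrum ℂ (P.map (algebraMap ℝ ℂ)), ‖μ‖ < 1) :
    Tendsto (P ^ ·) atTop (𝓝 0) := by
  have hre := ((continuous_id.matrix_map Complex.continuous_re).tendsto 0).comp
    (tendsto_pow_atTop_nhds_zero_of_norm_spectrum_lt_one hP)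
  convert hre using 2 with k
  · rw [Function.comp_apply, id, ← Matrix.map_pow, map_map]
    ext
    simp
  · simp

theorem eq_zero_of_le_mulVec {P : Matrix n n ℝ} (hP : ∀ i j, 0 ≤ P i j)
    (hpow : Tendsto (P ^ ·) atTop (𝓝 0)) {v : n → ℝ} (hv₀ : 0 ≤ v) (hv : v ≤ P *ᵥ v) :
    v = 0 := by
  have hle : ∀ k, v ≤ P ^ k *ᵥ v := by
    intro k
    induction k with
    | zero => simp
    | succ k ih =>
      calc v ≤ P *ᵥ v := hv
        _ ≤ P *ᵥ (P ^ k *ᵥ v) := mulVec_mono_of_nonneg hP ih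
        _ = P ^ (k + 1) *ᵥ v := by rw [mulVec_mulVec, pow_succ']
  have hlim : Tendsto (fun k => P ^ k *ᵥ v) atTop (𝓝 0) :=
    ((continuous_id.matrix_mulVec continuous_const).tendsto' 0 0 (zero_mulVec v)).comp hpow
  exact le_antisymm (ge_of_tendsto' hlim hle) hv₀

end Matrix

/-- `F` is the fluid and `H` the history of the D-iteration for `X = P *ᵥ X + (P - 1) *ᵥ x`,
diffusing coordinate `ι k` at step `k` only when its fluid is negative. -/
structure NegativeDiffusion {n : Type*} [Fintype n] [DecidableEq n] (P : Matrix n n ℝ)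
    (x : n → ℝ) (ι : ℕ → n) (F H : ℕ → n → ℝ) : Prop where
  fluid_zero : F 0 = (P - 1) *ᵥ x
  history_zero : H 0 = 0
  fluid_succ : ∀ k, F (k + 1) = if F k (ι k) < 0 then
    (1 - single (ι k) (ι k) 1 + P * single (ι k) (ι k) 1) *ᵥ F k else F k
  history_succ : ∀ k, H (k + 1) = if F k (ι k) < 0 then
    H k + single (ι k) (ι k) 1 *ᵥ F k else H k

namespace NegativeDiffusion

variable {n : Type*} [Fintype n] [DecidableEq n] {P : Matrix n n ℝ} {x : n → ℝ} {ι : ℕ → n}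
  {F H : ℕ → n → ℝ}

theorem history_succ_eq (hD : NegativeDiffusion P x ι F H) (k : ℕ) :
    H (k + 1) = if F k (ι k) < 0 then H k + Pi.single (ι k) (F k (ι k)) else H k := by
  rw [hD.history_succ k, single_mulVec, one_mul]
  rfl

theorem history_succ_apply_self (hD : NegativeDiffusion P x ι F H) {k : ℕ}
    (hneg : F k (ι k) < 0) : H (k + 1) (ι k) = H k (ι k) + F k (ι k) := by
  simp [hD.history_succ_eq k, hneg]

theorem fluid_eq (hD : NegativeDiffusion P x ι F H) (k : ℕ) :
    F k = (P - 1) *ᵥ (x + H k) := by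
  induction k with
  | zero => simp [hD.fluid_zero, hD.history_zero]
  | succ k ih =>
    rw [hD.fluid_succ k, hD.history_succ k]
    split_ifs
    · rw [← add_assoc, mulVec_add, ← ih, add_mulVec, sub_mulVec, one_mulVec, ← mulVec_mulVec,
        sub_mulVec P, one_mulVec]
      abel
    · exact ih

theorem history_antitone (hD : NegativeDiffusion P x ι F H) : Antitone H := by
  refine antitone_nat_of_succ_le fun k => ?_
  rw [hD.history_succ_eq k]
  split_ifs with hneg
  · exact add_le_of_nonpos_right (Pi.single_nonpos.2 hneg.le)
  · exact le_rfl

theorem add_history_nonneg (hD : NegativeDiffusion P x ι F H) (hP : ∀ i j, 0 ≤ P i j)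
    (hx : 0 ≤ x) (k : ℕ) : 0 ≤ x + H k := by
  induction k with
  | zero => simpa [hD.history_zero] using hx
  | succ k ih =>
    by_cases hneg : F k (ι k) < 0
    · intro i
      by_cases hi : i = ι k
      · subst hi
        have hdiff : x (ι k) + H (k + 1) (ι k) = (P *ᵥ (x + H k)) (ι k) := by
          rw [hD.history_succ_apply_self hneg, hD.fluid_eq k, sub_mulVec, one_mulVec]
          simp only [Pi.sub_apply, Pi.add_apply]
          ring
        simpa [hdiff] using mulVec_mono_of_nonneg hP ih (ι k)
      · simpa [hD.history_succ_eq k, hneg, hi] using ih i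
    · simpa [hD.history_succ_eq k, hneg] using ih

theorem exists_tendsto_history (hD : NegativeDiffusion P x ι F H) (hP : ∀ i j, 0 ≤ P i j)
    (hx : 0 ≤ x) : ∃ L, Tendsto H atTop (𝓝 L) :=
  ⟨_, tendsto_atTop_ciInf hD.history_antitone
    ⟨-x, by rintro _ ⟨k, rfl⟩; exact neg_le_iff_add_nonneg'.2 (hD.add_history_nonneg hP hx k)⟩⟩

theorem tendsto_fluid (hD : NegativeDiffusion P x ι F H) {L : n → ℝ}
    (hL : Tendsto H atTop (𝓝 L)) : Tendsto F atTop (𝓝 ((P - 1) *ᵥ (x + L))) := by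
  simp only [funext hD.fluid_eq]
  exact ((continuous_const.matrix_mulVec continuous_id).tendsto _).comp
    (tendsto_const_nhds.add hL)

theorem limit_fluid_nonneg (hD : NegativeDiffusion P x ι F H)
    (hfair : ∀ i, ∃ᶠ k in atTop, ι k = i) {L : n → ℝ} (hL : Tendsto H atTop (𝓝 L)) :
    0 ≤ (P - 1) *ᵥ (x + L) := by
  intro i
  by_contra! hc
  rw [Pi.zero_apply] at hc
  set c := ((P - 1) *ᵥ (x + L)) i
  have hF : ∀ᶠ k in atTop, F k i < c / 2 :=
    (tendsto_pi_nhds.1 (hD.tendsto_fluid hL) i).eventually_lt_const (by linarith)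
  have hH : ∀ᶠ k in atTop, c / 2 < H (k + 1) i - H k i := by
    have := ((tendsto_pi_nhds.1 hL i).comp (tendsto_add_atTop_nat 1)).sub
      (tendsto_pi_nhds.1 hL i)
    exact (sub_self (L i) ▸ this).eventually_const_lt (by linarith)
  obtain ⟨k, rfl, hFk, hHk⟩ := ((hfair i).and_eventually (hF.and hH)).exists
  rw [hD.history_succ_apply_self (by linarith)] at hHk
  linarith

theorem tendsto (hD : NegativeDiffusion P x ι F H) (hP : ∀ i j, 0 ≤ P i j)
    (hpow : Tendsto (P ^ ·) atTop (𝓝 0)) (hx : 0 ≤ x) (hfair : ∀ i, ∃ᶠ k in atTop, ι k = i) :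
    Tendsto H atTop (𝓝 (-x)) ∧ Tendsto F atTop (𝓝 0) := by
  obtain ⟨L, hL⟩ := hD.exists_tendsto_history hP hx
  have hG₀ : 0 ≤ x + L :=
    ge_of_tendsto' (tendsto_const_nhds.add hL) (hD.add_history_nonneg hP hx)
  have hG : x + L ≤ P *ᵥ (x + L) := by
    simpa [sub_mulVec] using hD.limit_fluid_nonneg hfair hL
  have hG0 : x + L = 0 := eq_zero_of_le_mulVec hP hpow hG₀ hG
  refine ⟨eq_neg_of_add_eq_zero_right hG0 ▸ hL, ?_⟩
  simpa [hG0] using hD.tendsto_fluid hL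

end NegativeDiffusion

theorem negative_diffusion_converges_general {N : ℕ}
    (P : Matrix (Fin N) (Fin N) ℝ) (hPpos : ∀ i j, 0 ≤ P i j)
    (hρ : ∀ μ ∈ spectrum ℂ (P.map (algebraMap ℝ ℂ)), ‖μ‖ < 1)
    (ι : ℕ → Fin N) (hfair : ∀ i : Fin N, ∀ m : ℕ, ∃ n ≥ m, ι n = i)
    (F H : ℕ → Fin N → ℝ)
    (hF0 : F 0 = P *ᵥ (fun _ => (1 : ℝ) / N) - fun _ => (1 : ℝ) / N)
    (hH0 : H 0 = 0)
    (hF : ∀ n, F (n + 1) = if F n (ι n) < 0 then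
      (1 - Matrix.single (ι n) (ι n) 1 + P * Matrix.single (ι n) (ι n) 1) *ᵥ F n
      else F n)
    (hH : ∀ n, H (n + 1) = if F n (ι n) < 0 then
      H n + Matrix.single (ι n) (ι n) 1 *ᵥ F n else H n) :
    Tendsto H atTop (𝓝 fun _ => -((1 : ℝ) / N)) ∧ Tendsto F atTop (𝓝 0) := by
  have hD : NegativeDiffusion P (fun _ => (1 : ℝ) / N) ι F H :=
    ⟨by rw [hF0, sub_mulVec, one_mulVec], hH0, hF, hH⟩
  exact hD.tendsto hPpos (tendsto_pow_atTop_nhds_zero_of_norm_spectrum_map_lt_one hρ)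
    (fun _ => by positivity) fun i => frequently_atTop.2 (hfair i)

/-- negative-fluid-only diffusion with `ρ(P) < 1`: starting from
`F_0 = P·e - e` with `e = (1/N,…,1/N)`, diffusing only coordinates with negative fluid
along a fair sequence, `H_n` converges to `-e` and the residual fluid tends to `0`. -/
theorem negative_diffusion_converges {N : ℕ} (hN : 0 < N)
    (P : Matrix (Fin N) (Fin N) ℝ) (hPpos : ∀ i j, 0 ≤ P i j)
    (hρ : ∀ μ ∈ spectrum ℂ (P.map (algebraMap ℝ ℂ)), ‖μ‖ < 1)
    (ι : ℕ → Fin N) (hfair : ∀ i : Fin N, ∀ m : ℕ, ∃ n ≥ m, ι n = i)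
    (F H : ℕ → Fin N → ℝ)
    (hF0 : F 0 = P *ᵥ (fun _ => (1 : ℝ) / N) - fun _ => (1 : ℝ) / N)
    (hH0 : H 0 = 0)
    (hF : ∀ n, F (n + 1) = if F n (ι n) < 0 then
      (1 - Matrix.single (ι n) (ι n) 1 + P * Matrix.single (ι n) (ι n) 1) *ᵥ F n
      else F n)
    (hH : ∀ n, H (n + 1) = if F n (ι n) < 0 then
      H n + Matrix.single (ι n) (ι n) 1 *ᵥ F n else H n) :
    Tendsto H atTop (𝓝 fun _ => -((1 : ℝ) / N)) ∧ Tendsto F atTop (𝓝 0) :=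
  negative_diffusion_converges_general P hPpos hρ ι hfair F H hF0 hH0 hF hH
end
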